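/- arXiv:0801.2753 — 2 statements merged into one kernel-verified Lean document; each statement's English description precedes it below -/
import Mathlib

section
/- For every integer p ≥ 1 and every n ≥ 1, E(V_n^p) ≤ 2^p (n+1)^p E(N_n(0)^p). -/
/-! Fix a time `i ≤ n`. The times `j ≥ i` with `S_j = S_i` are the returns to `0` of the walk
restarted at time `i`, and the times `j ≤ i` with `S_j = S_i` are those of the walk run backwards
from time `i`. Both walks have as increments distinct `X_k`, which are i.i.d., so their local times
at `0` have the law of `N_m(0)` for some `m ≤ n` and `p`-th moments at most `E N_n(0)^p`. Thus
`V_n` is dominated by a sum of `2(n+1)` such local times, and Jensen's inequality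
`(∑ a_t)^p ≤ (2(n+1))^(p-1) ∑ a_t^p` gives the bound. -/

open MeasureTheory ProbabilityTheory Finset

/-- `localTimeZero y m` is `N_m(0)` for the walk whose increments are `y 0, y 1, …`. -/
noncomputable def localTimeZero (y : ℕ → ℤ) (m : ℕ) : ℝ :=
  ∑ k ∈ range (m + 1), if ∑ r ∈ range k, y r = 0 then 1 else 0

namespace localTimeZero

lemma nonneg (y : ℕ → ℤ) (m : ℕ) : 0 ≤ localTimeZero y m :=
  sum_nonneg fun _ _ => by positivity

lemma le_succ (y : ℕ → ℤ) (m : ℕ) : localTimeZero y m ≤ m + 1 := by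
  calc localTimeZero y m ≤ ∑ _k ∈ range (m + 1), (1 : ℝ) :=
        sum_le_sum fun _ _ => by split_ifs <;> norm_num
    _ = m + 1 := by simp

lemma mono (y : ℕ → ℤ) {m n : ℕ} (hmn : m ≤ n) : localTimeZero y m ≤ localTimeZero y n :=
  sum_le_sum_of_subset_of_nonneg (range_subset_range.2 (by omega)) fun _ _ _ => by positivity

lemma congr {y z : ℕ → ℤ} {m : ℕ} (h : ∀ r < m, y r = z r) :
    localTimeZero y m = localTimeZero z m := by
  refine sum_congr rfl fun k hk => ?_
  rw [sum_congr rfl fun r hr => h r (by simp only [mem_range] at hk hr; omega)]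

lemma shift (y : ℕ → ℤ) (i m : ℕ) :
    localTimeZero (fun r => y (i + r)) m
      = ∑ j ∈ Ico i (i + m + 1), if ∑ r ∈ range i, y r = ∑ r ∈ range j, y r then 1 else 0 := by
  rw [sum_Ico_eq_sum_range, show i + m + 1 - i = m + 1 by omega]
  refine sum_congr rfl fun k _ => ?_
  simp only [sum_range_add, left_eq_add]

lemma reverse (y : ℕ → ℤ) (i : ℕ) :
    localTimeZero (fun r => y (i - 1 - r)) i
      = ∑ j ∈ range (i + 1), if ∑ r ∈ range i, y r = ∑ r ∈ range j, y r then 1 else 0 := by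
  rw [← sum_range_reflect]
  refine sum_congr rfl fun k hk => ?_
  have hk : k ≤ i := by simp only [mem_range] at hk; omega
  have hsplit : ∑ r ∈ range i, y r = ∑ r ∈ range (i - k), y r + ∑ r ∈ range k, y (i - 1 - r) := by
    conv_lhs => rw [show i = i - k + k by omega, sum_range_add]
    rw [← sum_range_reflect (fun r => y (i - k + r))]
    exact congrArg _ (sum_congr rfl fun r hr => by simp only [mem_range] at hr; congr 1; omega)
  simp only [show i + 1 - 1 - k = i - k by omega, hsplit, add_eq_left]

end localTimeZero

lemma sum_ite_sum_range_eq_le_localTimeZero_add (y : ℕ → ℤ) {i n : ℕ} (hi : i ≤ n) :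
    ∑ j ∈ range (n + 1), (if ∑ r ∈ range i, y r = ∑ r ∈ range j, y r then (1 : ℝ) else 0)
      ≤ localTimeZero (fun r => y (i + r)) (n - i) + localTimeZero (fun r => y (i - 1 - r)) i := by
  rw [localTimeZero.shift, localTimeZero.reverse, show i + (n - i) + 1 = n + 1 by omega,
    ← sum_range_add_sum_Ico _ (by omega : i + 1 ≤ n + 1), add_comm]
  gcongr ?_ + _
  exact sum_le_sum_of_subset_of_nonneg (Ico_subset_Ico_left (by omega)) fun _ _ _ => by positivity

section Moments

variable {Ω : Type*} [MeasurableSpace Ω] {μ : Measure Ω}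

lemma integral_pow_le_card_pow_mul_of_le_sum {ι : Type*} {s : Finset ι} {Y : Ω → ℝ}
    {Z : ι → Ω → ℝ} {M : ℝ} (q : ℕ) (hY : ∀ ω, 0 ≤ Y ω) (hZ : ∀ t ω, 0 ≤ Z t ω)
    (hYZ : ∀ ω, Y ω ≤ ∑ t ∈ s, Z t ω) (hZint : ∀ t ∈ s, Integrable (fun ω => Z t ω ^ (q + 1)) μ)
    (hZM : ∀ t ∈ s, ∫ ω, Z t ω ^ (q + 1) ∂μ ≤ M) :
    ∫ ω, Y ω ^ (q + 1) ∂μ ≤ (#s : ℝ) ^ (q + 1) * M := by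
  have hpointwise : ∀ ω, Y ω ^ (q + 1) ≤ (#s : ℝ) ^ q * ∑ t ∈ s, Z t ω ^ (q + 1) := fun ω =>
    (pow_le_pow_left₀ (hY ω) (hYZ ω) _).trans
      (pow_sum_le_card_mul_sum_pow (fun t _ => hZ t ω) q)
  calc ∫ ω, Y ω ^ (q + 1) ∂μ ≤ ∫ ω, (#s : ℝ) ^ q * ∑ t ∈ s, Z t ω ^ (q + 1) ∂μ :=
        integral_mono_of_nonneg (.of_forall fun ω => by have := hY ω; positivity)
          ((integrable_finsetSum s hZint).const_mul _) (.of_forall hpointwise)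
    _ = (#s : ℝ) ^ q * ∑ t ∈ s, ∫ ω, Z t ω ^ (q + 1) ∂μ := by
        rw [integral_const_mul, integral_finsetSum s hZint]
    _ ≤ (#s : ℝ) ^ q * ∑ _t ∈ s, M := by gcongr with t ht; exact hZM t ht
    _ = (#s : ℝ) ^ (q + 1) * M := by rw [sum_const, nsmul_eq_mul, pow_succ, mul_assoc]

variable {X : ℕ → Ω → ℤ}

lemma aemeasurable_localTimeZero (hX : ∀ r, AEMeasurable (X r) μ) (m : ℕ) :
    AEMeasurable (fun ω => localTimeZero (fun r => X r ω) m) μ :=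
  Finset.aemeasurable_fun_sum _ fun _ _ =>
    (Measurable.of_discrete (f := fun z : ℤ => if z = 0 then (1 : ℝ) else 0)).comp_aemeasurable
      (Finset.aemeasurable_fun_sum _ fun r _ => hX r)

lemma integrable_localTimeZero_pow [IsFiniteMeasure μ] (hX : ∀ r, AEMeasurable (X r) μ)
    (m q : ℕ) : Integrable (fun ω => localTimeZero (fun r => X r ω) m ^ q) μ :=
  .of_bound ((aemeasurable_localTimeZero hX m).pow_const q).aestronglyMeasurable ((m + 1) ^ q)
    (.of_forall fun ω => by
      rw [Real.norm_eq_abs, abs_of_nonneg (pow_nonneg (localTimeZero.nonneg _ _) _)]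
      exact pow_le_pow_left₀ (localTimeZero.nonneg _ _) (localTimeZero.le_succ _ _) q)

/-- Only the first `m` increments enter `localTimeZero · m`, and these are i.i.d. in any order. -/
lemma integral_localTimeZero_comp_pow (hindep : iIndepFun X μ)
    (hident : ∀ k, IdentDistrib (X k) (X 0) μ μ) {m : ℕ} {τ : ℕ → ℕ}
    (hτ : Set.InjOn τ (Set.Iio m)) (q : ℕ) :
    ∫ ω, localTimeZero (fun r => X (τ r) ω) m ^ q ∂μ
      = ∫ ω, localTimeZero (fun r => X r ω) m ^ q ∂μ := by
  have hτ' : Function.Injective fun i : Fin m => τ i :=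
    fun i j h => Fin.ext (hτ i.isLt j.isLt h)
  have htuple : IdentDistrib (fun ω (i : Fin m) => X (τ i) ω) (fun ω (i : Fin m) => X i ω) μ μ :=
    .pi (fun i => (hident _).trans (hident _).symm) (hindep.precomp hτ')
      (hindep.precomp Fin.val_injective)
  let g : (Fin m → ℤ) → ℝ := fun y =>
    localTimeZero (fun r => if h : r < m then y ⟨r, h⟩ else 0) m ^ q
  have hg : ∀ z : ℕ → ℤ, g (fun i => z i) = localTimeZero z m ^ q := fun z => by
    simp only [g]
    congr 1
    exact localTimeZero.congr fun r hr => dif_pos hr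
  convert (htuple.comp (measurable_of_countable g)).integral_eq using 2 <;>
    exact funext fun ω => (hg _).symm

lemma integral_localTimeZero_comp_pow_le [IsProbabilityMeasure μ] (hindep : iIndepFun X μ)
    (hident : ∀ k, IdentDistrib (X k) (X 0) μ μ) {m n : ℕ} (hmn : m ≤ n) {τ : ℕ → ℕ}
    (hτ : Set.InjOn τ (Set.Iio m)) (q : ℕ) :
    ∫ ω, localTimeZero (fun r => X (τ r) ω) m ^ q ∂μ
      ≤ ∫ ω, localTimeZero (fun r => X r ω) n ^ q ∂μ := by
  rw [integral_localTimeZero_comp_pow hindep hident hτ]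
  exact integral_mono_of_nonneg (.of_forall fun ω => pow_nonneg (localTimeZero.nonneg _ _) _)
    (integrable_localTimeZero_pow (fun r => (hident r).aemeasurable_fst) n q)
    (.of_forall fun ω => pow_le_pow_left₀ (localTimeZero.nonneg _ _) (localTimeZero.mono _ hmn) q)

end Moments

theorem stmt3_general
    {Ω : Type*} [MeasureSpace Ω] [IsProbabilityMeasure (ℙ : Measure Ω)]
    (X : ℕ → Ω → ℤ)
    (hXindep : iIndepFun X ℙ)
    (hXident : ∀ k, IdentDistrib (X k) (X 0) ℙ ℙ)
    (S : ℕ → Ω → ℤ) (hS : ∀ n ω, S n ω = ∑ k ∈ Finset.range n, X k ω)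
    (N : ℕ → ℤ → Ω → ℝ)
    (hN : ∀ n x ω, N n x ω = ∑ k ∈ Finset.range (n + 1), if S k ω = x then (1 : ℝ) else 0)
    (V : ℕ → Ω → ℝ)
    (hV : ∀ n ω, V n ω = ∑ i ∈ Finset.range (n + 1), ∑ j ∈ Finset.range (n + 1),
      if S i ω = S j ω then (1 : ℝ) else 0)
    (p : ℕ) (hp : 1 ≤ p) (n : ℕ) :
    ∫ ω, (V n ω) ^ p ≤ 2 ^ p * (n + 1 : ℝ) ^ p * ∫ ω, (N n 0 ω) ^ p := by
  obtain ⟨q, rfl⟩ := Nat.exists_eq_add_of_le' hp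
  have hNω : N n 0 = fun ω => localTimeZero (fun r => X r ω) n := by
    ext ω; simp only [hN, hS, localTimeZero]
  set s := (range (n + 1)).disjSum (range (n + 1))
  let Z : ℕ ⊕ ℕ → Ω → ℝ := Sum.elim (fun i ω => localTimeZero (fun r => X (i + r) ω) (n - i))
    (fun i ω => localTimeZero (fun r => X (i - 1 - r) ω) i)
  have hVZ : ∀ ω, V n ω ≤ ∑ t ∈ s, Z t ω := fun ω => by
    rw [hV, sum_disjSum, ← sum_add_distrib]
    simp only [hS]
    exact sum_le_sum fun i hi =>
      sum_ite_sum_range_eq_le_localTimeZero_add _ (Nat.le_of_lt_succ (mem_range.1 hi))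
  have hZ : ∀ t ∈ s, ∫ ω, Z t ω ^ (q + 1) ≤ ∫ ω, N n 0 ω ^ (q + 1) := by
    rintro (i | i) hi <;> rw [hNω]
    · exact integral_localTimeZero_comp_pow_le hXindep hXident (Nat.sub_le n i)
        (fun _ _ _ _ h => Nat.add_left_cancel h) _
    · rw [inr_mem_disjSum, mem_range] at hi
      exact integral_localTimeZero_comp_pow_le hXindep hXident (by omega)
        (fun a ha b hb h => by simp only [Set.mem_Iio] at ha hb; omega) _
  have hV0 : ∀ ω, 0 ≤ V n ω := fun ω => by
    rw [hV]; exact sum_nonneg fun _ _ => sum_nonneg fun _ _ => by positivity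
  have hZ0 : ∀ t ω, 0 ≤ Z t ω := by rintro (i | i) ω <;> exact localTimeZero.nonneg _ _
  have hZint : ∀ t ∈ s, Integrable (fun ω => Z t ω ^ (q + 1)) := by
    rintro (i | i) - <;>
      exact integrable_localTimeZero_pow (fun r => (hXident _).aemeasurable_fst) _ _
  calc ∫ ω, V n ω ^ (q + 1)
      ≤ (#s : ℝ) ^ (q + 1) * ∫ ω, N n 0 ω ^ (q + 1) :=
        integral_pow_le_card_pow_mul_of_le_sum q hV0 hZ0 hVZ hZint hZ
    _ = 2 ^ (q + 1) * (n + 1 : ℝ) ^ (q + 1) * ∫ ω, N n 0 ω ^ (q + 1) := by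
        rw [card_disjSum, card_range, ← mul_pow]; push_cast; ring

/-- Let `S` be a random walk with i.i.d. integer-valued increments,
`N n x` its local time at `x` up to time `n`, and `V n` its number of self-intersections
up to time `n`. Then for every integer `p ≥ 1` and every `n ≥ 1`,
`E(V_n ^ p) ≤ 2^p * (n+1)^p * E(N_n(0) ^ p)`. -/
theorem stmt3
    {Ω : Type*} [MeasureSpace Ω] [IsProbabilityMeasure (ℙ : Measure Ω)]
    (X : ℕ → Ω → ℤ) (hXmeas : ∀ k, Measurable (X k))
    (hXindep : iIndepFun X ℙ)
    (hXident : ∀ k, IdentDistrib (X k) (X 0) ℙ ℙ)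
    (S : ℕ → Ω → ℤ) (hS : ∀ n ω, S n ω = ∑ k ∈ Finset.range n, X k ω)
    (N : ℕ → ℤ → Ω → ℝ)
    (hN : ∀ n x ω, N n x ω = ∑ k ∈ Finset.range (n + 1), if S k ω = x then (1 : ℝ) else 0)
    (V : ℕ → Ω → ℝ)
    (hV : ∀ n ω, V n ω = ∑ i ∈ Finset.range (n + 1), ∑ j ∈ Finset.range (n + 1),
      if S i ω = S j ω then (1 : ℝ) else 0)
    (p : ℕ) (hp : 1 ≤ p) (n : ℕ) (hn : 1 ≤ n) :
    ∫ ω, (V n ω) ^ p ≤ 2 ^ p * (n + 1 : ℝ) ^ p * ∫ ω, (N n 0 ω) ^ p :=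
  stmt3_general X hXindep hXident S hS N hN V hV p hp n
end

section
/- For all integers 0 ≤ k ≤ m, E[ Σ_{x∈ℤ} (N_m(x) − N_k(x))² ] ≤ E[ V_{m−k} ]. -/
/-!
Writing `N m x - N k x` as the number of visits to `x` at times `k < i ≤ m`, the sum over `x` of
its square counts the pairs `(i, j)` of such times with `S i = S j`. Re-centred at `S (k + 1)`,
these are the self-intersections before time `m - k` of the walk with increments
`X (k + 1), X (k + 2), …`, which has the same law as the original walk because the increments
are i.i.d.; so the expectation is that of a count which is pointwise at most `V (m - k)`.
-/

open MeasureTheory ProbabilityTheory Finset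

noncomputable def collisionCount {ι α : Type*} [DecidableEq α] (s : Finset ι) (f : ι → α) : ℝ :=
  ∑ i ∈ s, ∑ j ∈ s, if f i = f j then 1 else 0

section collisionCount

variable {ι α : Type*} [DecidableEq α]

theorem tsum_sq_sum_ite_eq_collisionCount (s : Finset ι) (f : ι → α) :
    ∑' x, (∑ i ∈ s, if f i = x then (1 : ℝ) else 0) ^ 2 = collisionCount s f := by
  have hsupp : ∀ x ∉ s.image f, (∑ i ∈ s, if f i = x then (1 : ℝ) else 0) ^ 2 = 0 := by
    intro x hx
    rw [sum_eq_zero fun i hi => if_neg fun (h : f i = x) => hx (h ▸ mem_image_of_mem f hi), sq,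
      zero_mul]
  rw [tsum_eq_sum hsupp, collisionCount]
  simp_rw [sq, sum_mul_sum, ite_mul, one_mul, zero_mul]
  rw [sum_comm]
  refine sum_congr rfl fun i hi => ?_
  rw [sum_comm]
  refine sum_congr rfl fun j _ => ?_
  rw [sum_ite_eq, if_pos (mem_image_of_mem f hi)]
  exact if_congr eq_comm rfl rfl

theorem collisionCount_mono (f : ι → α) {s t : Finset ι} (hst : s ⊆ t) :
    collisionCount s f ≤ collisionCount t f := by
  have hnn : ∀ i j, (0 : ℝ) ≤ if f i = f j then 1 else 0 := fun i j => by positivity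
  calc collisionCount s f ≤ ∑ i ∈ s, ∑ j ∈ t, if f i = f j then (1 : ℝ) else 0 :=
        sum_le_sum fun i _ => sum_le_sum_of_subset_of_nonneg hst fun j _ _ => hnn i j
    _ ≤ collisionCount t f :=
        sum_le_sum_of_subset_of_nonneg hst fun i _ _ => sum_nonneg fun j _ => hnn i j

theorem collisionCount_comp_injective {β : Type*} [DecidableEq β] (s : Finset ι) (f : ι → α)
    {g : α → β}
    (hg : Function.Injective g) : collisionCount s (g ∘ f) = collisionCount s f := by
  simp [collisionCount, hg.eq_iff]

theorem collisionCount_Ico (f : ℕ → α) (a b : ℕ) :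
    collisionCount (Ico a b) f = collisionCount (range (b - a)) (fun i => f (a + i)) := by
  simp only [collisionCount, sum_Ico_eq_sum_range]

theorem abs_collisionCount_le (s : Finset ι) (f : ι → α) :
    |collisionCount s f| ≤ (#s : ℝ) ^ 2 := by
  have hnn : 0 ≤ collisionCount s f := sum_nonneg fun i _ => sum_nonneg fun j _ => by positivity
  rw [abs_of_nonneg hnn, sq]
  calc collisionCount s f ≤ ∑ _i ∈ s, ∑ _j ∈ s, (1 : ℝ) :=
        sum_le_sum fun i _ => sum_le_sum fun j _ => by split_ifs <;> norm_num
    _ = #s * #s := by simp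

end collisionCount

section Measurability

variable {Ω ι α : Type*} [MeasurableSpace Ω] [MeasurableSpace α] [MeasurableEq α] [DecidableEq α]
  {F : ι → Ω → α}

theorem measurable_collisionCount (hF : ∀ i, Measurable (F i)) (s : Finset ι) :
    Measurable fun ω => collisionCount s (F · ω) :=
  Finset.measurable_sum _ fun i _ => Finset.measurable_sum _ fun j _ =>
    Measurable.ite (measurableSet_eq_fun (hF i) (hF j)) measurable_const measurable_const

theorem integrable_collisionCount {μ : Measure Ω} [IsFiniteMeasure μ] (hF : ∀ i, Measurable (F i))
    (s : Finset ι) : Integrable (fun ω => collisionCount s (F · ω)) μ :=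
  .of_bound (measurable_collisionCount hF s).aestronglyMeasurable _
    (ae_of_all _ fun _ => (Real.norm_eq_abs _).trans_le (abs_collisionCount_le s _))

end Measurability

def partialSums {β : Type*} [AddCommMonoid β] (y : ℕ → β) (n : ℕ) : β :=
  ∑ l ∈ range n, y l

theorem measurable_partialSums {β : Type*} [AddCommMonoid β] [MeasurableSpace β]
    [MeasurableAdd₂ β] (n : ℕ) : Measurable fun y : ℕ → β => partialSums y n :=
  Finset.measurable_sum _ fun l _ => measurable_pi_apply l

theorem ProbabilityTheory.iIndepFun.identDistrib_shift {Ω β : Type*} [MeasurableSpace Ω]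
    {μ : Measure Ω} [IsProbabilityMeasure μ] [MeasurableSpace β] {X : ℕ → Ω → β}
    (hindep : iIndepFun X μ) (hident : ∀ k, IdentDistrib (X k) (X 0) μ μ) (c : ℕ) :
    IdentDistrib (fun ω l => X (c + l) ω) (fun ω l => X l ω) μ μ :=
  .pi (fun l => (hident _).trans (hident l).symm) (hindep.precomp (add_right_injective c)) hindep

/-- Let `S` be a random walk with i.i.d. integer-valued increments,
`N n x` its local time at `x` up to time `n`, and `V n` its number of self-intersections
up to time `n`. Then for all integers `0 ≤ k ≤ m`,
`E[Σ_{x∈ℤ} (N m x − N k x)²] ≤ E[V (m−k)]`. -/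
theorem stmt17
    {Ω : Type*} [MeasureSpace Ω] [IsProbabilityMeasure (ℙ : Measure Ω)]
    (X : ℕ → Ω → ℤ) (hXmeas : ∀ k, Measurable (X k))
    (hXindep : iIndepFun X ℙ)
    (hXident : ∀ k, IdentDistrib (X k) (X 0) ℙ ℙ)
    (S : ℕ → Ω → ℤ) (hS : ∀ n ω, S n ω = ∑ j ∈ Finset.range n, X j ω)
    (N : ℕ → ℤ → Ω → ℝ)
    (hN : ∀ n x ω, N n x ω = ∑ j ∈ Finset.range (n + 1), if S j ω = x then (1 : ℝ) else 0)
    (V : ℕ → Ω → ℝ)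
    (hV : ∀ n ω, V n ω = ∑ i ∈ Finset.range (n + 1), ∑ j ∈ Finset.range (n + 1),
      if S i ω = S j ω then (1 : ℝ) else 0)
    (k m : ℕ) (hkm : k ≤ m) :
    ∫ ω, (∑' x : ℤ, (N m x ω - N k x ω) ^ 2) ≤ ∫ ω, V (m - k) ω := by
  have hshift :
      ∀ ω a, S (k + 1 + a) ω = S (k + 1) ω + partialSums (fun l => X (k + 1 + l) ω) a := by
    intro ω a
    rw [hS, hS, sum_range_add, partialSums]
  have hwindow : ∀ ω, ∑' x : ℤ, (N m x ω - N k x ω) ^ 2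
      = collisionCount (range (m - k)) (partialSums (fun l => X (k + 1 + l) ω)) := by
    intro ω
    have hdiff : ∀ x, N m x ω - N k x ω = ∑ i ∈ Ico (k + 1) (m + 1), if S i ω = x then 1 else 0 :=
      fun x => by rw [hN, hN, sum_Ico_eq_sub _ (by omega)]
    simp_rw [hdiff, tsum_sq_sum_ite_eq_collisionCount, collisionCount_Ico, Nat.add_sub_add_right,
      hshift]
    exact collisionCount_comp_injective _ _ (add_right_injective (S (k + 1) ω))
  have hV' : ∀ ω, V (m - k) ω = collisionCount (range (m - k + 1)) (partialSums (X · ω)) := by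
    intro ω
    simp only [hV, hS, collisionCount, partialSums]
  have hmeas : ∀ n, Measurable fun ω => partialSums (X · ω) n :=
    fun n => (measurable_partialSums n).comp (measurable_pi_lambda _ hXmeas)
  calc ∫ ω, ∑' x : ℤ, (N m x ω - N k x ω) ^ 2
      = ∫ ω, collisionCount (range (m - k)) (partialSums (fun l => X (k + 1 + l) ω)) :=
        integral_congr_ae (ae_of_all _ hwindow)
    _ = ∫ ω, collisionCount (range (m - k)) (partialSums (X · ω)) :=
        ((hXindep.identDistrib_shift hXident (k + 1)).comp
          (measurable_collisionCount measurable_partialSums _)).integral_eq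
    _ ≤ ∫ ω, collisionCount (range (m - k + 1)) (partialSums (X · ω)) :=
        integral_mono (integrable_collisionCount hmeas _) (integrable_collisionCount hmeas _)
          fun ω => collisionCount_mono _ (range_subset_range.2 (m - k).le_succ)
    _ = ∫ ω, V (m - k) ω := by simp_rw [hV']
end
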